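/- In a (G,A)-quandle Q(G,A), if x * y = x then y * x = y. -/
import Mathlib


open Quandles

namespace GA

variable {G : Type*} [Group G]

/-- The equivalence relation on `A × G`: `(a, gh) ~ (a, h)` for `g ∈ C_G(a)`,
i.e. `(a,u) ~ (b,v)` iff `a = b` and `u * v⁻¹` centralizes `a`. -/
def rel (A : Set G) (p q : A × G) : Prop :=
  p.1 = q.1 ∧ p.2 * q.2⁻¹ ∈ Subgroup.centralizer ({(p.1 : G)} : Set G)

theorem rel_equiv (A : Set G) : Equivalence (rel A) := by
  constructor
  · intro p
    exact ⟨rfl, by simpa using (Subgroup.centralizer ({(p.1 : G)} : Set G)).one_mem⟩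
  · rintro p q ⟨h1, h2⟩
    refine ⟨h1.symm, ?_⟩
    have := (Subgroup.centralizer ({(p.1 : G)} : Set G)).inv_mem h2
    simpa [h1] using this
  · rintro p q r ⟨h1, h2⟩ ⟨h1', h2'⟩
    refine ⟨h1.trans h1', ?_⟩
    have := (Subgroup.centralizer ({(p.1 : G)} : Set G)).mul_mem h2 (by rw [h1]; exact h2')
    simpa [mul_assoc] using this

instance setoid (A : Set G) : Setoid (A × G) := ⟨rel A, rel_equiv A⟩

/-- The `(G,A)`-quandle as a set: the quotient of `A × G` by `(a,gh) ~ (a,h)`, `g ∈ C_G(a)`. -/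
def Q (G : Type*) [Group G] (A : Set G) : Type _ := Quotient (setoid A)

/-- The class of `(a,u)` in `Q(G,A)`. -/
def mk {A : Set G} (a : A) (u : G) : Q G A := Quotient.mk (setoid A) (a, u)

/-- representative-level operation `(a,u) * (b,v) = (a, u v⁻¹ b v)`,
written as a left action of `(b,v)` on `(a,u)`. -/
def pop {A : Set G} (x y : A × G) : A × G := (y.1, y.2 * x.2⁻¹ * (x.1 : G) * x.2)

/-- representative-level inverse operation `(a,u) *⁻¹ (b,v) = (a, u v⁻¹ b⁻¹ v)`. -/
def pinv {A : Set G} (x y : A × G) : A × G := (y.1, y.2 * x.2⁻¹ * (x.1 : G)⁻¹ * x.2)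

theorem centralizer_mem_iff {a u : G} : u ∈ Subgroup.centralizer ({a} : Set G) ↔ u * a = a * u := by
  rw [Subgroup.mem_centralizer_singleton_iff]

theorem conj_indep {b v d : G} (h : d * b = b * d) : ((d * v))⁻¹ * b * (d * v) = v⁻¹ * b * v := by
  have h' : d⁻¹ * b * d = b := by
    rw [mul_assoc, ← h]; group
  calc (d * v)⁻¹ * b * (d * v) = v⁻¹ * (d⁻¹ * b * d) * v := by group
    _ = v⁻¹ * b * v := by rw [h']

theorem pop_well {A : Set G} : ∀ (x₁ y₁ x₂ y₂ : A × G), rel A x₁ x₂ → rel A y₁ y₂ →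
    rel A (pop x₁ y₁) (pop x₂ y₂) := by
  rintro ⟨b₁, v₁⟩ ⟨a₁, u₁⟩ ⟨b₂, v₂⟩ ⟨a₂, u₂⟩ ⟨hb, hv⟩ ⟨ha, hu⟩
  refine ⟨ha, ?_⟩
  simp only [pop]
  rw [centralizer_mem_iff] at hv hu ⊢
  have hb' : (b₁ : G) = (b₂ : G) := congrArg _ hb
  have key : v₁⁻¹ * (b₁ : G) * v₁ = v₂⁻¹ * (b₂ : G) * v₂ := by
    conv_lhs => rw [show v₁ = (v₁ * v₂⁻¹) * v₂ by group, hb']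
    exact conj_indep (by rw [← hb']; exact hv)
  have heq : u₁ * v₁⁻¹ * (b₁:G) * v₁ * (u₂ * v₂⁻¹ * (b₂:G) * v₂)⁻¹ = u₁ * u₂⁻¹ := by
    calc u₁ * v₁⁻¹ * (b₁:G) * v₁ * (u₂ * v₂⁻¹ * (b₂:G) * v₂)⁻¹
        = u₁ * (v₁⁻¹ * (b₁:G) * v₁) * (v₂⁻¹ * (b₂:G) * v₂)⁻¹ * u₂⁻¹ := by group
      _ = u₁ * (v₂⁻¹ * (b₂:G) * v₂) * (v₂⁻¹ * (b₂:G) * v₂)⁻¹ * u₂⁻¹ := by rw [key]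
      _ = u₁ * u₂⁻¹ := by group
  rw [heq]
  exact hu

theorem pinv_well {A : Set G} : ∀ (x₁ y₁ x₂ y₂ : A × G), rel A x₁ x₂ → rel A y₁ y₂ →
    rel A (pinv x₁ y₁) (pinv x₂ y₂) := by
  rintro ⟨b₁, v₁⟩ ⟨a₁, u₁⟩ ⟨b₂, v₂⟩ ⟨a₂, u₂⟩ ⟨hb, hv⟩ ⟨ha, hu⟩
  refine ⟨ha, ?_⟩
  simp only [pinv]
  rw [centralizer_mem_iff] at hv hu ⊢
  have hb' : (b₁ : G) = (b₂ : G) := congrArg _ hb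
  have hvc : (v₁ * v₂⁻¹) * (b₂ : G)⁻¹ = (b₂ : G)⁻¹ * (v₁ * v₂⁻¹) := by
    have : Commute (v₁ * v₂⁻¹) (b₂ : G) := by rw [← hb']; exact hv
    exact this.inv_right
  have key : v₁⁻¹ * (b₁ : G)⁻¹ * v₁ = v₂⁻¹ * (b₂ : G)⁻¹ * v₂ := by
    conv_lhs => rw [show v₁ = (v₁ * v₂⁻¹) * v₂ by group, hb']
    exact conj_indep hvc
  have heq : u₁ * v₁⁻¹ * (b₁:G)⁻¹ * v₁ * (u₂ * v₂⁻¹ * (b₂:G)⁻¹ * v₂)⁻¹ = u₁ * u₂⁻¹ := by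
    calc u₁ * v₁⁻¹ * (b₁:G)⁻¹ * v₁ * (u₂ * v₂⁻¹ * (b₂:G)⁻¹ * v₂)⁻¹
        = u₁ * (v₁⁻¹ * (b₁:G)⁻¹ * v₁) * (v₂⁻¹ * (b₂:G)⁻¹ * v₂)⁻¹ * u₂⁻¹ := by group
      _ = u₁ * (v₂⁻¹ * (b₂:G)⁻¹ * v₂) * (v₂⁻¹ * (b₂:G)⁻¹ * v₂)⁻¹ * u₂⁻¹ := by rw [key]
      _ = u₁ * u₂⁻¹ := by group
  rw [heq]
  exact hu

instance quandle (G : Type*) [Group G] (A : Set G) : Quandle (Q G A) where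
  act := Quotient.map₂ pinv (fun _ _ h _ _ h' => pinv_well _ _ _ _ h h')
  invAct := Quotient.map₂ pop (fun _ _ h _ _ h' => pop_well _ _ _ _ h h')
  self_distrib := by
    rintro ⟨⟨b,v⟩⟩ ⟨⟨c,w⟩⟩ ⟨⟨a,u⟩⟩
    refine Quotient.sound ⟨rfl, ?_⟩
    simp only [pinv]
    rw [centralizer_mem_iff]
    group
  left_inv := by
    rintro ⟨⟨b,v⟩⟩ ⟨⟨a,u⟩⟩
    refine Quotient.sound ⟨rfl, ?_⟩
    simp only [pop, pinv]
    rw [centralizer_mem_iff]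
    group
  right_inv := by
    rintro ⟨⟨b,v⟩⟩ ⟨⟨a,u⟩⟩
    refine Quotient.sound ⟨rfl, ?_⟩
    simp only [pop, pinv]
    rw [centralizer_mem_iff]
    group
  fix := by
    rintro ⟨⟨a,u⟩⟩
    refine Quotient.sound ⟨rfl, ?_⟩
    simp only [pinv]
    rw [centralizer_mem_iff]
    have : (u * u⁻¹ * (a:G)⁻¹ * u) * u⁻¹ = (a : G)⁻¹ := by group
    rw [this]
    group

@[simp] theorem invAct_mk {A : Set G} (a b : A) (u v : G) :
    Rack.invAct (mk b v) (mk a u) = mk a (u * v⁻¹ * (b : G) * v) := rfl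

@[simp] theorem act_mk {A : Set G} (a b : A) (u v : G) :
    Shelf.act (mk b v) (mk a u) = mk a (u * v⁻¹ * (b : G)⁻¹ * v) := rfl

end GA

/-- In a `(G,A)`-quandle `Q(G,A)`, if `x * y = x` then `y * x = y`
(here `y * x` is the quandle operation `Rack.invAct x y`, acting on `y` by `x`). -/
theorem GA_op_fix_symm (G : Type*) [Group G] (A : Set G) (x y : GA.Q G A)
    (h : Rack.invAct y x = x) : Rack.invAct x y = y := by
  obtain ⟨⟨a,u⟩⟩ := x
  obtain ⟨⟨b,v⟩⟩ := y
  obtain ⟨-, hc⟩ := Quotient.exact h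
  refine Quotient.sound ⟨rfl, ?_⟩
  rw [GA.centralizer_mem_iff] at hc ⊢
  simp only [GA.pop] at hc ⊢
  have h2 := congrArg (fun g => v * u⁻¹ * g * (u * v⁻¹)) hc
  have l : v * u⁻¹ * (u * v⁻¹ * (b:G) * v * u⁻¹ * (a:G)) * (u * v⁻¹)
      = (b:G) * (v * u⁻¹ * (a:G) * u * v⁻¹) := by group
  have r : v * u⁻¹ * ((a:G) * (u * v⁻¹ * (b:G) * v * u⁻¹)) * (u * v⁻¹)
      = v * u⁻¹ * (a:G) * u * v⁻¹ * (b:G) := by group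
  rw [l, r] at h2
  exact h2.symm
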